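/- arXiv:2305.19046 — 2 statements merged into one kernel-verified Lean document; each statement's English description precedes it below -/
import Mathlib

section
/- Let 0 < γ ≤ β ≤ n and f ≥ 0 on ℝ^n. Then for every x ∈ ℝ^n, M_{H^β_∞} f(x) ≤ (β/γ) (M_{H^γ_∞}(f^(γ/β))(x))^(β/γ), where M_{H^β_∞} f(x) := sup_{r>0} (1/(ω_β r^β)) ∫_{B(x,r)} f dH^β_∞ is the centered Hausdorff content maximal function. -/
open scoped ENNReal
open Metric Set MeasureTheory

noncomputable section

/-- `ℝⁿ` as Euclidean space. -/
abbrev Rn (n : ℕ) := EuclideanSpace ℝ (Fin n)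

/-- The Choquet integral of a nonnegative function `g` with respect to a
(monotone) set function `C`: `∫ g dC := ∫_0^∞ C({g > t}) dt`. -/
noncomputable def choquet {X : Type*} (C : Set X → ℝ≥0∞) (g : X → ℝ≥0∞) : ℝ≥0∞ :=
  ∫⁻ t in Ioi (0 : ℝ), C {x | ENNReal.ofReal t < g x}

/-- The Choquet integral of `g` restricted to a set `A`. -/
noncomputable def choquetOn {X : Type*} (C : Set X → ℝ≥0∞) (A : Set X) (g : X → ℝ≥0∞) : ℝ≥0∞ :=
  ∫⁻ t in Ioi (0 : ℝ), C {x | x ∈ A ∧ ENNReal.ofReal t < g x}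

/-- The `L^∞(C)` norm: `inf {λ > 0 : C({|f| > λ}) = 0}` (formulated in `ℝ≥0∞`). -/
noncomputable def choquetEssSup {X : Type*} (C : Set X → ℝ≥0∞) (f : X → ℝ) : ℝ≥0∞ :=
  sInf {l : ℝ≥0∞ | C {x | l < ENNReal.ofReal |f x|} = 0}

/-- `C`-quasicontinuity of a function `f`. -/
def QuasiCont {X : Type*} [TopologicalSpace X] (C : Set X → ℝ≥0∞) (f : X → ℝ) : Prop :=
  ∀ ε : ℝ≥0∞, 0 < ε → ∃ U : Set X, IsOpen U ∧ C U < ε ∧ ContinuousOn f Uᶜ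

/-- Membership in the capacitary space `L^p(C)`: `C`-quasicontinuous with
finite `p`-th power Choquet integral. -/
def MemChoquetLp {X : Type*} [TopologicalSpace X] (C : Set X → ℝ≥0∞) (p : ℝ) (f : X → ℝ) : Prop :=
  QuasiCont C f ∧ choquet C (fun x => ENNReal.ofReal |f x| ^ p) < ∞

/-- The normalization constant `ω_β = π^{β/2}/Γ(β/2+1)`. -/
noncomputable def omegaC (β : ℝ) : ℝ≥0∞ :=
  ENNReal.ofReal (Real.pi ^ (β / 2) / Real.Gamma (β / 2 + 1))

/-- The `β`-dimensional Hausdorff content `H^β_∞`, defined via countable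
coverings by balls: `inf {∑ ω_β r_i^β : E ⊆ ⋃ B(x_i, r_i)}`. -/
noncomputable def hContent (n : ℕ) (β : ℝ) (E : Set (Rn n)) : ℝ≥0∞ :=
  ⨅ (c : ℕ → Rn n × ℝ) (_ : E ⊆ ⋃ i, ball (c i).1 (c i).2),
    ∑' i, omegaC β * ENNReal.ofReal ((c i).2 ^ β)

/-- The centered Hausdorff content maximal function
`M_{H^β_∞} g(x) := sup_{r>0} (1/(ω_β r^β)) ∫_{B(x,r)} g dH^β_∞`. -/
noncomputable def maximalH (n : ℕ) (β : ℝ) (g : Rn n → ℝ≥0∞) (x : Rn n) : ℝ≥0∞ :=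
  ⨆ (r : ℝ) (_ : 0 < r),
    (omegaC β * ENNReal.ofReal (r ^ β))⁻¹ * choquetOn (hContent n β) (ball x r) g
-- auxiliary lemmas

lemma omegaC_pos {β : ℝ} (hβ : 0 ≤ β) : 0 < omegaC β := by
  apply ENNReal.ofReal_pos.2
  apply div_pos (Real.rpow_pos_of_pos Real.pi_pos _)
  exact Real.Gamma_pos_of_pos (by linarith)

lemma tsum_rpow_le_aux (a : ℕ → ℝ≥0∞) {p : ℝ} (hp : 1 ≤ p) :
    ∑' i, a i ^ p ≤ (∑' i, a i) ^ p := by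
  set T := ∑' i, a i with hT
  calc ∑' i, a i ^ p ≤ ∑' i, T ^ (p - 1) * a i := by
        refine ENNReal.tsum_le_tsum fun i => ?_
        have h1 : a i ^ p = a i ^ (p - 1) * a i := by
          conv_lhs => rw [show p = (p - 1) + 1 by ring]
          rw [ENNReal.rpow_add_of_nonneg _ _ (by linarith) zero_le_one, ENNReal.rpow_one]
        rw [h1]
        exact mul_le_mul_left (ENNReal.rpow_le_rpow (ENNReal.le_tsum i) (by linarith)) _
    _ = T ^ (p - 1) * T := ENNReal.tsum_mul_left
    _ = T ^ p := by
        rw [show T ^ (p - 1) * T = T ^ (p - 1) * T ^ (1:ℝ) by rw [ENNReal.rpow_one],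
          ← ENNReal.rpow_add_of_nonneg _ _ (by linarith) zero_le_one]
        norm_num

lemma hContent_mono (n : ℕ) (β : ℝ) {E E' : Set (Rn n)} (h : E ⊆ E') :
    hContent n β E ≤ hContent n β E' := by
  refine le_iInf fun c => le_iInf fun hc => ?_
  exact iInf₂_le c (h.trans hc)

lemma hContent_compare (n : ℕ) {γ β : ℝ} (hγ0 : 0 < γ) (hγβ : γ ≤ β) (E : Set (Rn n)) :
    (omegaC β)⁻¹ * hContent n β E ≤ ((omegaC γ)⁻¹ * hContent n γ E) ^ (β / γ) := by
  have hβ0 : 0 < β := lt_of_lt_of_le hγ0 hγβ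
  have hp1 : 1 ≤ β / γ := (one_le_div hγ0).2 hγβ
  have hp0 : 0 < β / γ := lt_of_lt_of_le one_pos hp1
  have hq0 : 0 < γ / β := div_pos hγ0 hβ0
  have hqp : γ / β * (β / γ) = 1 := by field_simp
  have hωβ0 : omegaC β ≠ 0 := (omegaC_pos hβ0.le).ne'
  have hωγ0 : omegaC γ ≠ 0 := (omegaC_pos hγ0.le).ne'
  have key : ((omegaC β)⁻¹ * hContent n β E) ^ (γ / β) ≤ (omegaC γ)⁻¹ * hContent n γ E := by
    rw [mul_comm ((omegaC γ)⁻¹) _, ← div_eq_mul_inv,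
      ENNReal.le_div_iff_mul_le (Or.inl hωγ0) (Or.inl ENNReal.ofReal_ne_top), hContent]
    refine le_iInf fun c => le_iInf fun hc => ?_
    set c' : ℕ → Rn n × ℝ := fun i => ((c i).1, max (c i).2 0) with hc'def
    have hc' : E ⊆ ⋃ i, ball (c' i).1 (c' i).2 := by
      refine hc.trans (iUnion_mono fun i => ball_subset_ball (le_max_left _ _))
    set a : ℕ → ℝ≥0∞ := fun i => ENNReal.ofReal ((max (c i).2 0) ^ γ) with ha
    have hrad : ∀ i, ENNReal.ofReal ((c' i).2 ^ β) = a i ^ (β / γ) := by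
      intro i
      have h0 : (0:ℝ) ≤ max (c i).2 0 := le_max_right _ _
      have h1 : (c' i).2 ^ β = ((max (c i).2 0) ^ γ) ^ (β / γ) := by
        rw [← Real.rpow_mul h0]
        congr 1
        field_simp
      rw [h1, ha, ENNReal.ofReal_rpow_of_nonneg (Real.rpow_nonneg h0 γ) hp0.le]
    have h2 : (omegaC β)⁻¹ * hContent n β E ≤ ∑' i, a i ^ (β / γ) := by
      calc (omegaC β)⁻¹ * hContent n β E
          ≤ (omegaC β)⁻¹ * ∑' i, omegaC β * a i ^ (β / γ) := by
            refine mul_le_mul_right ?_ _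
            refine le_trans (iInf₂_le c' hc') ?_
            refine ENNReal.tsum_le_tsum fun i => ?_
            rw [hrad i]
        _ = ∑' i, a i ^ (β / γ) := by
            rw [ENNReal.tsum_mul_left, ← mul_assoc,
              ENNReal.inv_mul_cancel hωβ0 ENNReal.ofReal_ne_top, one_mul]
    have h3 : ((omegaC β)⁻¹ * hContent n β E) ^ (γ / β) ≤ ∑' i, a i := by
      calc ((omegaC β)⁻¹ * hContent n β E) ^ (γ / β)
          ≤ ((∑' i, a i) ^ (β / γ)) ^ (γ / β) :=
            ENNReal.rpow_le_rpow (h2.trans (tsum_rpow_le_aux a hp1)) hq0.le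
        _ = ∑' i, a i := by
            rw [← ENNReal.rpow_mul, show β / γ * (γ / β) = 1 by field_simp, ENNReal.rpow_one]
    calc ((omegaC β)⁻¹ * hContent n β E) ^ (γ / β) * omegaC γ
        ≤ (∑' i, a i) * omegaC γ := mul_le_mul_left h3 _
      _ = ∑' i, a i * omegaC γ := ENNReal.tsum_mul_right.symm
      _ ≤ ∑' i, omegaC γ * ENNReal.ofReal ((c i).2 ^ γ) := by
          refine ENNReal.tsum_le_tsum fun i => ?_
          rw [mul_comm]
          refine mul_le_mul_right ?_ _
          rcases le_or_gt (c i).2 0 with h | h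
          · simp only [ha, max_eq_right h, Real.zero_rpow hγ0.ne']
            simp
          · simp only [ha, max_eq_left h.le]
            exact le_rfl
  calc (omegaC β)⁻¹ * hContent n β E
      = (((omegaC β)⁻¹ * hContent n β E) ^ (γ / β)) ^ (β / γ) := by
        rw [← ENNReal.rpow_mul, hqp, ENNReal.rpow_one]
    _ ≤ _ := ENNReal.rpow_le_rpow key hp0.le


/-- For `0 < γ ≤ β ≤ n` and `f ≥ 0`, pointwise
`M_{H^β_∞} f(x) ≤ (β/γ) (M_{H^γ_∞}(f^{γ/β})(x))^{β/γ}`. -/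
theorem statement4 (n : ℕ) (γ β : ℝ) (hγ : 0 < γ) (hγβ : γ ≤ β) (hβn : β ≤ n)
    (f : Rn n → ℝ≥0∞) (x : Rn n) :
    maximalH n β f x ≤
      ENNReal.ofReal (β / γ) * (maximalH n γ (fun y => f y ^ (γ / β)) x) ^ (β / γ) := by
  have hβ0 : 0 < β := lt_of_lt_of_le hγ hγβ
  have hp1 : 1 ≤ β / γ := (one_le_div hγ).2 hγβ
  have hp0 : 0 < β / γ := lt_of_lt_of_le one_pos hp1
  have hq0 : 0 < γ / β := div_pos hγ hβ0
  have hγp : γ * (β / γ) = β := by field_simp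
  have hpq1 : β / γ * (γ / β) = 1 := by field_simp
  set p := β / γ with hp
  set q := γ / β with hq
  set g : Rn n → ℝ≥0∞ := fun y => f y ^ q with hg
  set M := maximalH n γ g x with hM
  rcases eq_or_ne M ⊤ with hMt | hMt
  · rw [hMt, ENNReal.top_rpow_of_pos hp0, ENNReal.mul_top]
    · exact le_top
    · simp only [ne_eq, ENNReal.ofReal_eq_zero, not_le]
      exact hp0
  have hωβ0 : omegaC β ≠ 0 := (omegaC_pos hβ0.le).ne'
  have hωγ0 : omegaC γ ≠ 0 := (omegaC_pos hγ.le).ne'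
  simp only [maximalH]
  refine iSup₂_le fun r hr => ?_
  set B := ball x r with hB
  have hrγ0 : ENNReal.ofReal (r ^ γ) ≠ 0 := by
    simp only [ne_eq, ENNReal.ofReal_eq_zero, not_le]
    exact Real.rpow_pos_of_pos hr γ
  set cγ := (omegaC γ * ENNReal.ofReal (r ^ γ))⁻¹ with hcγ
  set cβ := (omegaC β * ENNReal.ofReal (r ^ β))⁻¹ with hcβ
  have hcγt : cγ ≠ ⊤ := by
    rw [hcγ, ENNReal.inv_ne_top]
    exact mul_ne_zero hωγ0 hrγ0
  have hcβt : cβ ≠ ⊤ := by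
    rw [hcβ, ENNReal.inv_ne_top]
    refine mul_ne_zero hωβ0 ?_
    simp only [ne_eq, ENNReal.ofReal_eq_zero, not_le]
    exact Real.rpow_pos_of_pos hr β
  set F : ℝ → Set (Rn n) := fun s => {y | y ∈ B ∧ ENNReal.ofReal s < g y} with hF
  set w : ℝ → ℝ≥0∞ := fun s => cγ * hContent n γ (F s) with hw
  set A := cγ * choquetOn (hContent n γ) B g with hA
  have hAM : A ≤ M := by
    rw [hM, hA]
    simp only [maximalH]
    exact le_iSup₂ (f := fun (r : ℝ) (_ : 0 < r) =>
      (omegaC γ * ENNReal.ofReal (r ^ γ))⁻¹ * choquetOn (hContent n γ) (ball x r) g) r hr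
  have hAt : A ≠ ⊤ := (lt_of_le_of_lt hAM (lt_top_iff_ne_top.2 hMt)).ne
  have hwint : ∫⁻ s in Ioi (0:ℝ), w s = A := by
    simp only [hw, hF, hA, choquetOn]
    rw [← lintegral_const_mul' cγ _ hcγt]
  have hwA : ∀ s : ℝ, 0 < s → w s ≤ A * (ENNReal.ofReal s)⁻¹ := by
    intro s hs
    rw [← div_eq_mul_inv, ENNReal.le_div_iff_mul_le
      (Or.inl (by simp only [ne_eq, ENNReal.ofReal_eq_zero, not_le]; exact hs))
      (Or.inl ENNReal.ofReal_ne_top), mul_comm]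
    calc ENNReal.ofReal s * w s = ∫⁻ _ in Ioo (0:ℝ) s, w s := by
          rw [setLIntegral_const, Real.volume_Ioo, sub_zero, mul_comm]
      _ ≤ ∫⁻ t in Ioo (0:ℝ) s, w t := by
          refine lintegral_mono_ae ((ae_restrict_iff' measurableSet_Ioo).2 (ae_of_all _ ?_))
          intro t ht
          refine mul_le_mul_right (hContent_mono n γ fun y hy => ?_) _
          exact ⟨hy.1, lt_of_le_of_lt (ENNReal.ofReal_le_ofReal ht.2.le) hy.2⟩
      _ ≤ ∫⁻ t in Ioi (0:ℝ), w t := lintegral_mono_set Ioo_subset_Ioi_self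
      _ = A := hwint
  have hR : ENNReal.ofReal (r ^ γ) ^ p = ENNReal.ofReal (r ^ β) := by
    rw [ENNReal.ofReal_rpow_of_nonneg (Real.rpow_nonneg hr.le γ) hp0.le,
      ← Real.rpow_mul hr.le, hγp]
  have key2 : ∀ s : ℝ, cβ * hContent n β (F s) ≤ w s ^ p := by
    intro s
    have h1 := hContent_compare n hγ hγβ (F s)
    rw [← hp] at h1
    have e1 : cβ = (ENNReal.ofReal (r ^ β))⁻¹ * (omegaC β)⁻¹ := by
      rw [hcβ, ENNReal.mul_inv (Or.inl hωβ0) (Or.inl ENNReal.ofReal_ne_top), mul_comm]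
    have e2 : w s ^ p
        = (ENNReal.ofReal (r ^ β))⁻¹ * ((omegaC γ)⁻¹ * hContent n γ (F s)) ^ p := by
      simp only [hw, hcγ]
      rw [ENNReal.mul_inv (Or.inl hωγ0) (Or.inl ENNReal.ofReal_ne_top)]
      rw [show (omegaC γ)⁻¹ * (ENNReal.ofReal (r ^ γ))⁻¹ * hContent n γ (F s)
          = (ENNReal.ofReal (r ^ γ))⁻¹ * ((omegaC γ)⁻¹ * hContent n γ (F s)) by ring]
      rw [ENNReal.mul_rpow_of_nonneg _ _ hp0.le, ENNReal.inv_rpow, hR]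
    rw [e1, e2, mul_assoc]
    exact mul_le_mul_right h1 _
  set φ : ℝ → ℝ := fun s => s ^ p with hφ
  have himg : φ '' Ioi (0:ℝ) = Ioi 0 := by
    ext y
    simp only [hφ, mem_image, mem_Ioi]
    constructor
    · rintro ⟨s, hs, rfl⟩
      exact Real.rpow_pos_of_pos hs p
    · intro hy
      refine ⟨y ^ p⁻¹, Real.rpow_pos_of_pos hy _, ?_⟩
      rw [← Real.rpow_mul hy.le, inv_mul_cancel₀ (ne_of_gt hp0), Real.rpow_one]
  have hinj : InjOn φ (Ioi 0) := by
    have hmono : StrictMonoOn φ (Ioi 0) := fun a ha b hb hab =>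
      Real.rpow_lt_rpow (le_of_lt ha) hab hp0
    exact hmono.injOn
  have hderiv : ∀ s ∈ Ioi (0:ℝ), HasDerivWithinAt φ (p * s ^ (p - 1)) (Ioi 0) s := fun s hs =>
    (Real.hasDerivAt_rpow_const (Or.inl (ne_of_gt hs))).hasDerivWithinAt
  have hchg := lintegral_image_eq_lintegral_abs_det_fderiv_mul volume measurableSet_Ioi
      (fun s hs => (hderiv s hs).hasFDerivWithinAt) hinj (fun t => w (t ^ q) ^ p)
  rw [himg] at hchg
  simp only [ContinuousLinearMap.det_toSpanSingleton] at hchg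
  have hbound : ∀ s : ℝ, 0 < s →
      ENNReal.ofReal |p * s ^ (p - 1)| * w s ^ p ≤ ENNReal.ofReal p * A ^ (p - 1) * w s := by
    intro s hs
    have hsp : (0:ℝ) < s ^ (p - 1) := Real.rpow_pos_of_pos hs _
    rw [abs_of_pos (mul_pos hp0 hsp), ENNReal.ofReal_mul hp0.le]
    have hws : w s ^ p = w s ^ (p - 1) * w s := by
      conv_lhs => rw [show p = (p - 1) + 1 by ring]
      rw [ENNReal.rpow_add_of_nonneg _ _ (by linarith) zero_le_one, ENNReal.rpow_one]
    rw [hws]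
    calc ENNReal.ofReal p * ENNReal.ofReal (s ^ (p - 1)) * (w s ^ (p - 1) * w s)
        ≤ ENNReal.ofReal p * ENNReal.ofReal (s ^ (p - 1))
            * ((A * (ENNReal.ofReal s)⁻¹) ^ (p - 1) * w s) :=
          mul_le_mul_right
            (mul_le_mul_left (ENNReal.rpow_le_rpow (hwA s hs) (by linarith)) _) _
      _ = ENNReal.ofReal p * A ^ (p - 1)
            * (ENNReal.ofReal (s ^ (p - 1)) * (ENNReal.ofReal s ^ (p - 1))⁻¹ * w s) := by
          rw [ENNReal.mul_rpow_of_nonneg _ _ (by linarith : (0:ℝ) ≤ p - 1), ENNReal.inv_rpow]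
          ring
      _ = ENNReal.ofReal p * A ^ (p - 1) * w s := by
          rw [← ENNReal.ofReal_rpow_of_pos hs, ENNReal.mul_inv_cancel
            (ne_of_gt (ENNReal.rpow_pos (ENNReal.ofReal_pos.2 hs) ENNReal.ofReal_ne_top))
            (ENNReal.rpow_ne_top_of_nonneg (by linarith) ENNReal.ofReal_ne_top), one_mul]
  calc cβ * choquetOn (hContent n β) B f
      = ∫⁻ t in Ioi (0:ℝ), cβ * hContent n β {y | y ∈ B ∧ ENNReal.ofReal t < f y} := by
        rw [choquetOn, ← lintegral_const_mul' cβ _ hcβt]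
    _ ≤ ∫⁻ t in Ioi (0:ℝ), w (t ^ q) ^ p := by
        refine lintegral_mono_ae ((ae_restrict_iff' measurableSet_Ioi).2 (ae_of_all _ ?_))
        intro t ht
        rw [mem_Ioi] at ht
        have hset : {y | y ∈ B ∧ ENNReal.ofReal t < f y} = F (t ^ q) := by
          ext y
          simp only [hF, hg, mem_setOf_eq, and_congr_right_iff]
          intro _
          rw [← ENNReal.ofReal_rpow_of_pos ht]
          exact (ENNReal.rpow_lt_rpow_iff hq0).symm
        rw [hset]
        exact key2 (t ^ q)
    _ = ∫⁻ s in Ioi (0:ℝ), ENNReal.ofReal |p * s ^ (p - 1)| * w ((s ^ p) ^ q) ^ p := hchg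
    _ ≤ ∫⁻ s in Ioi (0:ℝ), ENNReal.ofReal p * A ^ (p - 1) * w s := by
        refine lintegral_mono_ae ((ae_restrict_iff' measurableSet_Ioi).2 (ae_of_all _ ?_))
        intro s hs
        rw [mem_Ioi] at hs
        rw [show (s ^ p) ^ q = s by
          rw [← Real.rpow_mul (le_of_lt hs), show p * q = 1 by rw [hp, hq]; field_simp,
            Real.rpow_one]]
        exact hbound s hs
    _ = ENNReal.ofReal p * A ^ (p - 1) * A := by
        rw [lintegral_const_mul' _ _ (ENNReal.mul_ne_top ENNReal.ofReal_ne_top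
          (ENNReal.rpow_ne_top_of_nonneg (by linarith) hAt)), hwint]
    _ = ENNReal.ofReal p * A ^ p := by
        rw [mul_assoc, show A ^ (p - 1) * A = A ^ (p - 1) * A ^ (1:ℝ) by rw [ENNReal.rpow_one],
          ← ENNReal.rpow_add_of_nonneg _ _ (by linarith) zero_le_one]
        norm_num
    _ ≤ ENNReal.ofReal p * M ^ p := mul_le_mul_right (ENNReal.rpow_le_rpow hAM hp0.le) _


end
end

section
/- Let C be a monotone, countably subadditive set function on ℝ^n with C(∅)=0, and let T be a quasi-linear operator satisfying |T(f₁+f₂)(x)| ≤ K(|T f₁(x)| + |T f₂(x)|). If T satisfies the weak-type (1,1) bound C({|Tf| > t}) ≤ (A₁/t) ∫ |f| dC for all f, and the strong-type (∞,∞) bound ‖Tf‖_{L^∞(C)} ≤ A₂ ‖f‖_{L^∞(C)}, then for every 1 < p < ∞ there is a constant A₃ = A₃(K, A₁, A₂, p) such that ∫ |Tf|^p dC ≤ A₃ ∫ |f|^p dC. -/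
open scoped ENNReal
open Metric Set MeasureTheory

noncomputable section

/-!
All the work happens on the half-line: a Choquet integral is the Lebesgue integral over `(0, ∞)`
of the antitone function `t ↦ C {|g| > t}`, so the only properties of `C` used are those of an
outer measure, and `∫ |g|^p dC = p ∫₀^∞ t^(p-1) C {|g| > t} dt` is a change of variables.

At level `t`, split `f` at height `a = t / (2 A₂ K)`. By the `(∞, ∞)` bound the part with
`|f| ≤ a` is mapped below `t / (2K)` outside a `C`-null set, so quasi-linearity and the weak
`(1, 1)` bound give `t C {|Tf| > t} ≤ 2 K A₁ ∫ |f 1_{|f| > a}| dC`, and the last integral equals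
`a C {|f| > a} + ∫ₐ^∞ C {|f| > s} ds`. Integrating against `p t^(p-2) dt`, a rescaling of the
first term and Tonelli for the second give the constant `2 K A₁ (2 A₂ K)^(p-1) p / (p - 1)`.
-/

lemma lintegral_Ioi_eq_lintegral_comp_rpow {p : ℝ} (hp : 0 < p) (g : ℝ → ℝ≥0∞) :
    ∫⁻ t in Ioi 0, g t = ∫⁻ s in Ioi 0, ENNReal.ofReal (p * s ^ (p - 1)) * g (s ^ p) := by
  have himage : (fun s : ℝ => s ^ p) '' Ioi 0 = Ioi 0 := by
    refine Subset.antisymm (image_subset_iff.2 fun s hs => Real.rpow_pos_of_pos hs p)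
      fun t ht => ⟨t ^ p⁻¹, Real.rpow_pos_of_pos ht _, Real.rpow_inv_rpow (le_of_lt ht) hp.ne'⟩
  calc ∫⁻ t in Ioi 0, g t = ∫⁻ t in (fun s : ℝ => s ^ p) '' Ioi 0, g t := by rw [himage]
    _ = ∫⁻ s in Ioi 0, ENNReal.ofReal |p * s ^ (p - 1)| * g (s ^ p) :=
      lintegral_image_eq_lintegral_abs_deriv_mul measurableSet_Ioi
        (fun s hs => (Real.hasDerivAt_rpow_const (Or.inl (ne_of_gt hs))).hasDerivWithinAt)
        ((Real.rpow_left_injOn hp.ne').mono fun _ hs => le_of_lt (mem_Ioi.1 hs)) g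
    _ = _ := setLIntegral_congr_fun measurableSet_Ioi fun s hs => by
      have : (0 : ℝ) < s := hs
      rw [abs_of_pos (by positivity)]

lemma lintegral_Ioi_eq_lintegral_comp_mul_left {c : ℝ} (hc : 0 < c) (g : ℝ → ℝ≥0∞) :
    ∫⁻ t in Ioi 0, g t = ENNReal.ofReal c * ∫⁻ s in Ioi 0, g (c * s) := by
  have himage : (c * ·) '' Ioi 0 = Ioi (0 : ℝ) := by
    refine Subset.antisymm (image_subset_iff.2 fun s hs => mul_pos hc hs)
      fun t ht => ⟨t / c, div_pos ht hc, mul_div_cancel₀ t hc.ne'⟩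
  calc ∫⁻ t in Ioi 0, g t = ∫⁻ t in (c * ·) '' Ioi 0, g t := by rw [himage]
    _ = ∫⁻ s in Ioi 0, ENNReal.ofReal |c| * g (c * s) :=
      lintegral_image_eq_lintegral_abs_deriv_mul measurableSet_Ioi
        (fun s _ => by simpa using ((hasDerivAt_id s).const_mul c).hasDerivWithinAt)
        (fun _ _ _ _ h => mul_left_cancel₀ hc.ne' h) g
    _ = _ := by rw [abs_of_pos hc, lintegral_const_mul' _ _ ENNReal.ofReal_ne_top]

lemma lintegral_Ioo_rpow {r b : ℝ} (hr : -1 < r) (hb : 0 ≤ b) :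
    ∫⁻ t in Ioo 0 b, ENNReal.ofReal (t ^ r) = ENNReal.ofReal (b ^ (r + 1) / (r + 1)) := by
  have hint : IntegrableOn (fun t : ℝ => t ^ r) (Ioo 0 b) :=
    (intervalIntegrable_iff_integrableOn_Ioo_of_le hb).1
      (intervalIntegral.intervalIntegrable_rpow' hr)
  rw [← ofReal_integral_eq_lintegral_ofReal hint
      (ae_restrict_of_forall_mem measurableSet_Ioo fun t ht => Real.rpow_nonneg ht.1.le r),
    ← integral_Ioc_eq_integral_Ioo, ← intervalIntegral.integral_of_le hb,
    integral_rpow (Or.inl hr), Real.zero_rpow (by linarith), sub_zero]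

lemma lintegral_Ioi_rpow_mul_ofReal_div_mul_comp_div (φ : ℝ → ℝ≥0∞) (p : ℝ) {c : ℝ}
    (hc : 0 < c) :
    ∫⁻ t in Ioi 0, ENNReal.ofReal (t ^ (p - 2)) * (ENNReal.ofReal (t / c) * φ (t / c)) =
      ENNReal.ofReal (c ^ (p - 1)) * ∫⁻ s in Ioi 0, ENNReal.ofReal (s ^ (p - 1)) * φ s := by
  have hpow : ∀ x : ℝ, 0 < x → x ^ (p - 1) = x ^ (p - 2) * x := fun x hx => by
    rw [← Real.rpow_add_one hx.ne']; ring_nf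
  have hscale : ∀ s ∈ Ioi (0 : ℝ),
      ENNReal.ofReal ((c * s) ^ (p - 2)) * (ENNReal.ofReal (c * s / c) * φ (c * s / c)) =
        ENNReal.ofReal (c ^ (p - 2)) * (ENNReal.ofReal (s ^ (p - 1)) * φ s) := fun s hs => by
    have hs : (0 : ℝ) < s := hs
    rw [mul_div_cancel_left₀ s hc.ne', ← mul_assoc, ← ENNReal.ofReal_mul (by positivity),
      hpow s hs, Real.mul_rpow hc.le hs.le, mul_assoc, ENNReal.ofReal_mul (by positivity),
      mul_assoc]
  rw [lintegral_Ioi_eq_lintegral_comp_mul_left hc, setLIntegral_congr_fun measurableSet_Ioi hscale,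
    lintegral_const_mul' _ _ ENNReal.ofReal_ne_top, ← mul_assoc,
    ← ENNReal.ofReal_mul hc.le, hpow c hc, mul_comm c]

lemma lintegral_Ioi_rpow_mul_lintegral_Ioi_div {φ : ℝ → ℝ≥0∞} (hφ : Measurable φ) {p c : ℝ}
    (hp : 1 < p) (hc : 0 < c) :
    ∫⁻ t in Ioi 0, ENNReal.ofReal (t ^ (p - 2)) * ∫⁻ s in Ioi (t / c), φ s =
      ENNReal.ofReal (c ^ (p - 1) / (p - 1)) *
        ∫⁻ s in Ioi 0, ENNReal.ofReal (s ^ (p - 1)) * φ s := by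
  set F : ℝ × ℝ → ℝ≥0∞ :=
    {q | q.1 < c * q.2}.indicator fun q => ENNReal.ofReal (q.1 ^ (p - 2)) * φ q.2
  have hF_meas : Measurable F :=
    (((measurable_fst.pow_const _).ennreal_ofReal).mul (hφ.comp measurable_snd)).indicator
      (measurableSet_lt measurable_fst (measurable_snd.const_mul c))
  calc ∫⁻ t in Ioi 0, ENNReal.ofReal (t ^ (p - 2)) * ∫⁻ s in Ioi (t / c), φ s
      = ∫⁻ t in Ioi 0, ∫⁻ s in Ioi 0, F (t, s) := by
        refine setLIntegral_congr_fun measurableSet_Ioi fun t ht => ?_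
        have ht : (0 : ℝ) < t / c := div_pos ht hc
        have hF : ∀ s, F (t, s) =
            (Ioi (t / c)).indicator (fun s => ENNReal.ofReal (t ^ (p - 2)) * φ s) s := fun s => by
          simp only [F, indicator_apply, mem_Ioi, mem_ofPred_eq, div_lt_iff₀' hc]
        simp_rw [hF]
        rw [lintegral_indicator measurableSet_Ioi, Measure.restrict_restrict measurableSet_Ioi,
          inter_eq_left.2 (Ioi_subset_Ioi ht.le), lintegral_const_mul' _ _ ENNReal.ofReal_ne_top]
    _ = ∫⁻ s in Ioi 0, ∫⁻ t in Ioi 0, F (t, s) := lintegral_lintegral_swap hF_meas.aemeasurable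
    _ = ∫⁻ s in Ioi 0, ENNReal.ofReal (c ^ (p - 1) / (p - 1)) *
          (ENNReal.ofReal (s ^ (p - 1)) * φ s) := by
        refine setLIntegral_congr_fun measurableSet_Ioi fun s hs => ?_
        have hs : (0 : ℝ) < s := hs
        have hF : ∀ t, F (t, s) =
            (Iio (c * s)).indicator (fun t => ENNReal.ofReal (t ^ (p - 2))) t * φ s := fun t => by
          simp only [F, indicator_apply, mem_Iio, mem_ofPred_eq]
          split_ifs <;> simp
        simp_rw [hF]
        rw [lintegral_mul_const _ (Measurable.indicator (by fun_prop) measurableSet_Iio),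
          lintegral_indicator measurableSet_Iio, Measure.restrict_restrict measurableSet_Iio,
          Iio_inter_Ioi, lintegral_Ioo_rpow (by linarith) (by positivity), ← mul_assoc,
          ← ENNReal.ofReal_mul (by positivity)]
        congr 2
        rw [show p - 2 + 1 = p - 1 by ring, Real.mul_rpow hc.le hs.le]
        ring
    _ = _ := lintegral_const_mul' _ _ ENNReal.ofReal_ne_top

lemma lintegral_Ioi_rpow_mul_truncation {φ : ℝ → ℝ≥0∞} (hφ : Measurable φ) {p c : ℝ}
    (hp : 1 < p) (hc : 0 < c) :
    ∫⁻ t in Ioi 0, ENNReal.ofReal (t ^ (p - 2)) *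
        (ENNReal.ofReal (t / c) * φ (t / c) + ∫⁻ s in Ioi (t / c), φ s) =
      ENNReal.ofReal (c ^ (p - 1) * p / (p - 1)) *
        ∫⁻ s in Ioi 0, ENNReal.ofReal (s ^ (p - 1)) * φ s := by
  have hp' : 0 < p - 1 := sub_pos.2 hp
  simp_rw [mul_add]
  rw [lintegral_add_left (by fun_prop), lintegral_Ioi_rpow_mul_ofReal_div_mul_comp_div φ p hc,
    lintegral_Ioi_rpow_mul_lintegral_Ioi_div hφ hp hc, ← add_mul,
    ← ENNReal.ofReal_add (by positivity) (by positivity)]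
  congr 2
  field_simp
  ring

lemma setOf_ofReal_lt_ofReal_abs {X : Type*} (g : X → ℝ) {t : ℝ} (ht : 0 ≤ t) :
    {x | ENNReal.ofReal t < ENNReal.ofReal |g x|} = {x | t < |g x|} := by
  ext x
  exact ENNReal.ofReal_lt_ofReal_iff_of_nonneg ht

theorem choquet_ofReal_abs_rpow {X : Type*} (C : Set X → ℝ≥0∞) {p : ℝ} (hp : 0 < p)
    (g : X → ℝ) :
    choquet C (fun x => ENNReal.ofReal |g x| ^ p) =
      ENNReal.ofReal p * ∫⁻ t in Ioi 0, ENNReal.ofReal (t ^ (p - 1)) * C {x | t < |g x|} := by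
  rw [choquet, lintegral_Ioi_eq_lintegral_comp_rpow hp,
    ← lintegral_const_mul' _ _ ENNReal.ofReal_ne_top]
  refine setLIntegral_congr_fun measurableSet_Ioi fun t ht => ?_
  have ht : (0 : ℝ) < t := ht
  have hlevel : {x | ENNReal.ofReal (t ^ p) < ENNReal.ofReal |g x| ^ p} = {x | t < |g x|} := by
    simp_rw [← ENNReal.ofReal_rpow_of_nonneg ht.le hp.le, ENNReal.rpow_lt_rpow_iff hp]
    exact setOf_ofReal_lt_ofReal_abs g ht.le
  rw [hlevel, ENNReal.ofReal_mul hp.le, mul_assoc]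

theorem choquet_ofReal_abs_indicator {X : Type*} (C : Set X → ℝ≥0∞) (f : X → ℝ) {a : ℝ}
    (ha : 0 ≤ a) :
    choquet C (fun x => ENNReal.ofReal |{x | a < |f x|}.indicator f x|) =
      ENNReal.ofReal a * C {x | a < |f x|} + ∫⁻ s in Ioi a, C {x | s < |f x|} := by
  have hlevel : ∀ s, 0 ≤ s → {x | ENNReal.ofReal s < ENNReal.ofReal |{x | a < |f x|}.indicator f x|}
      = {x | max s a < |f x|} := fun s hs => by
    rw [setOf_ofReal_lt_ofReal_abs _ hs]
    ext x
    by_cases hx : a < |f x| <;> simp [hs, hx]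
  rw [choquet, ← Ioc_union_Ioi_eq_Ioi ha, lintegral_union measurableSet_Ioi Ioc_disjoint_Ioi_same]
  congr 1
  · rw [setLIntegral_congr_fun measurableSet_Ioc fun s hs => by
        rw [hlevel s hs.1.le, max_eq_right hs.2],
      setLIntegral_const, Real.volume_Ioc, sub_zero, mul_comm]
  · exact setLIntegral_congr_fun measurableSet_Ioi fun s hs => by
      rw [hlevel s (ha.trans (le_of_lt hs)), max_eq_left (le_of_lt hs)]

section Interpolation

variable {X : Type*}

def IsQuasilinear (K : ℝ) (T : (X → ℝ) → X → ℝ) : Prop :=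
  ∀ (f₁ f₂ : X → ℝ) (x : X), |T (f₁ + f₂) x| ≤ K * (|T f₁ x| + |T f₂ x|)

def HasWeakTypeOneOne (C : Set X → ℝ≥0∞) (A : ℝ) (T : (X → ℝ) → X → ℝ) : Prop :=
  ∀ (f : X → ℝ) (t : ℝ), 0 < t →
    C {x | t < |T f x|} ≤ ENNReal.ofReal (A / t) * choquet C (fun x => ENNReal.ofReal |f x|)

def HasStrongTypeTopTop (C : Set X → ℝ≥0∞) (A : ℝ) (T : (X → ℝ) → X → ℝ) : Prop :=
  ∀ f : X → ℝ, choquetEssSup C (T f) ≤ ENNReal.ofReal A * choquetEssSup C f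

variable (μ : OuterMeasure X)

lemma choquetEssSup_le_ofReal_of_abs_le {h : X → ℝ} {r : ℝ} (hr : ∀ x, |h x| ≤ r) :
    choquetEssSup μ h ≤ ENNReal.ofReal r := by
  refine sInf_le (measure_mono_null (fun x hx => ?_) measure_empty)
  exact (ENNReal.ofReal_le_ofReal (hr x)).not_gt hx

lemma measure_lt_abs_eq_zero_of_choquetEssSup_le {h : X → ℝ} {r : ℝ} (hr : 0 ≤ r)
    (hle : choquetEssSup μ h ≤ ENNReal.ofReal r) : μ {x | r < |h x|} = 0 := by
  have hcover : {x | r < |h x|} ⊆ ⋃ k : ℕ, {x | r + 1 / (k + 1) < |h x|} := fun x hx => by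
    obtain ⟨k, hk⟩ := exists_nat_one_div_lt (sub_pos.2 (show r < |h x| from hx))
    exact mem_iUnion.2 ⟨k, by simp only [mem_ofPred_eq]; linarith⟩
  refine measure_mono_null hcover (measure_iUnion_null fun k => ?_)
  have hk : (0 : ℝ) < 1 / (k + 1) := by positivity
  obtain ⟨l, hl, hl_lt⟩ := sInf_lt_iff.1 <|
    hle.trans_lt ((ENNReal.ofReal_lt_ofReal_iff (by positivity)).2 (lt_add_of_pos_right r hk))
  refine measure_mono_null (fun x hx => ?_) hl
  exact hl_lt.trans ((ENNReal.ofReal_lt_ofReal_iff_of_nonneg (by positivity)).2 hx)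

variable {μ} {T : (X → ℝ) → X → ℝ} {K A₁ A₂ : ℝ}

theorem ofReal_mul_measure_lt_abs_le (hK : 0 < K) (hA₂ : 0 < A₂) (hquasi : IsQuasilinear K T)
    (hweak : HasWeakTypeOneOne μ A₁ T) (hstrong : HasStrongTypeTopTop μ A₂ T) (f : X → ℝ) {t : ℝ}
    (ht : 0 < t) :
    ENNReal.ofReal t * μ {x | t < |T f x|} ≤ ENNReal.ofReal (2 * K * A₁) *
      choquet μ (fun x => ENNReal.ofReal |{x | t / (2 * A₂ * K) < |f x|}.indicator f x|) := by
  set s := {x | t / (2 * A₂ * K) < |f x|}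
  have htK : 0 < t / (2 * K) := by positivity
  have hsmall : μ {x | t / (2 * K) < |T (sᶜ.indicator f) x|} = 0 := by
    have hbdd : ∀ x, |sᶜ.indicator f x| ≤ t / (2 * A₂ * K) := fun x => by
      by_cases hx : x ∈ s
      · rw [indicator_of_notMem (notMem_compl_iff.2 hx), abs_zero]; positivity
      · rw [indicator_of_mem (mem_compl hx)]; exact not_lt.1 hx
    refine measure_lt_abs_eq_zero_of_choquetEssSup_le μ htK.le ((hstrong _).trans ?_)
    calc ENNReal.ofReal A₂ * choquetEssSup μ (sᶜ.indicator f)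
        ≤ ENNReal.ofReal A₂ * ENNReal.ofReal (t / (2 * A₂ * K)) := by
          gcongr; exact choquetEssSup_le_ofReal_of_abs_le μ hbdd
      _ = ENNReal.ofReal (t / (2 * K)) := by
          rw [← ENNReal.ofReal_mul hA₂.le]; congr 1; field_simp
  have hsplit : {x | t < |T f x|} ⊆
      {x | t / (2 * K) < |T (s.indicator f) x|} ∪ {x | t / (2 * K) < |T (sᶜ.indicator f) x|} := by
    intro x hx
    by_contra hx'
    simp only [mem_union, mem_ofPred_eq, not_or, not_lt] at hx hx'
    have hq := hquasi (s.indicator f) (sᶜ.indicator f) x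
    rw [indicator_self_add_compl] at hq
    have : K * (t / (2 * K) + t / (2 * K)) = t := by field_simp; ring
    nlinarith
  calc ENNReal.ofReal t * μ {x | t < |T f x|}
      ≤ ENNReal.ofReal t * μ {x | t / (2 * K) < |T (s.indicator f) x|} := by
        gcongr ENNReal.ofReal t * ?_
        exact (measure_mono hsplit).trans <|
          (measure_union_le _ _).trans_eq (by rw [hsmall, add_zero])
    _ ≤ ENNReal.ofReal t * (ENNReal.ofReal (A₁ / (t / (2 * K))) *
          choquet μ (fun x => ENNReal.ofReal |s.indicator f x|)) := by
        gcongr; exact hweak _ _ htK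
    _ = _ := by
        rw [← mul_assoc, ← ENNReal.ofReal_mul ht.le]
        congr 2
        field_simp

theorem choquet_ofReal_abs_rpow_le (hK : 0 < K) (hA₂ : 0 < A₂) (hquasi : IsQuasilinear K T)
    (hweak : HasWeakTypeOneOne μ A₁ T) (hstrong : HasStrongTypeTopTop μ A₂ T) {p : ℝ}
    (hp : 1 < p) (f : X → ℝ) :
    choquet μ (fun x => ENNReal.ofReal |T f x| ^ p) ≤
      ENNReal.ofReal (2 * K * A₁ * ((2 * A₂ * K) ^ (p - 1) * p / (p - 1))) *
        choquet μ (fun x => ENNReal.ofReal |f x| ^ p) := by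
  set c := 2 * A₂ * K
  have hc : 0 < c := by positivity
  set φ : ℝ → ℝ≥0∞ := fun s => μ {x | s < |f x|}
  have hφ : Measurable φ := Antitone.measurable fun s s' (hss' : s ≤ s') =>
    measure_mono fun x (hx : s' < |f x|) => show s < |f x| from hss'.trans_lt hx
  calc choquet μ (fun x => ENNReal.ofReal |T f x| ^ p)
      = ENNReal.ofReal p *
          ∫⁻ t in Ioi 0, ENNReal.ofReal (t ^ (p - 1)) * μ {x | t < |T f x|} :=
        choquet_ofReal_abs_rpow μ (by linarith) (T f)
    _ = ENNReal.ofReal p * ∫⁻ t in Ioi 0,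
          ENNReal.ofReal (t ^ (p - 2)) * (ENNReal.ofReal t * μ {x | t < |T f x|}) := by
        congr 1
        refine setLIntegral_congr_fun measurableSet_Ioi fun t ht => ?_
        have ht : (0 : ℝ) < t := ht
        rw [← mul_assoc, ← ENNReal.ofReal_mul (by positivity), ← Real.rpow_add_one ht.ne']
        ring_nf
    _ ≤ ENNReal.ofReal p * ∫⁻ t in Ioi 0, ENNReal.ofReal (t ^ (p - 2)) *
          (ENNReal.ofReal (2 * K * A₁) *
            choquet μ (fun x => ENNReal.ofReal |{x | t / c < |f x|}.indicator f x|)) := by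
        gcongr ENNReal.ofReal p * ?_
        exact setLIntegral_mono' measurableSet_Ioi fun t ht => by
          gcongr ENNReal.ofReal (t ^ (p - 2)) * ?_
          exact ofReal_mul_measure_lt_abs_le hK hA₂ hquasi hweak hstrong f ht
    _ = ENNReal.ofReal p * (ENNReal.ofReal (2 * K * A₁) * ∫⁻ t in Ioi 0,
          ENNReal.ofReal (t ^ (p - 2)) *
            (ENNReal.ofReal (t / c) * φ (t / c) + ∫⁻ s in Ioi (t / c), φ s)) := by
        congr 1
        rw [← lintegral_const_mul' _ _ ENNReal.ofReal_ne_top]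
        refine setLIntegral_congr_fun measurableSet_Ioi fun t ht => ?_
        rw [choquet_ofReal_abs_indicator μ f (div_pos (mem_Ioi.1 ht) hc).le, mul_left_comm]
    _ = _ := by
        have hA₃ : 0 ≤ c ^ (p - 1) * p / (p - 1) := div_nonneg (by positivity) (by linarith)
        rw [lintegral_Ioi_rpow_mul_truncation hφ hp hc, choquet_ofReal_abs_rpow μ (by linarith) f,
          ENNReal.ofReal_mul' hA₃]
        ring

end Interpolation

/-- Marcinkiewicz-type interpolation for Choquet integrals: if a
quasi-linear operator `T` is of weak-type (1,1) and bounded on `L^∞(C)` for a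
monotone countably subadditive capacity `C` with `C ∅ = 0`, then for each
`1 < p < ∞` it is of strong-type `(p,p)` with a constant depending only on
`K, A₁, A₂, p`. -/
theorem statement5 (n : ℕ) (C : Set (Rn n) → ℝ≥0∞)
    (hempty : C ∅ = 0)
    (hmono : ∀ A B : Set (Rn n), A ⊆ B → C A ≤ C B)
    (hsub : ∀ s : ℕ → Set (Rn n), C (⋃ i, s i) ≤ ∑' i, C (s i))
    (T : (Rn n → ℝ) → (Rn n → ℝ)) (K A₁ A₂ : ℝ)
    (hK : 0 < K) (hA₁ : 0 < A₁) (hA₂ : 0 < A₂)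
    (hquasi : ∀ (f₁ f₂ : Rn n → ℝ) (x : Rn n),
      |T (f₁ + f₂) x| ≤ K * (|T f₁ x| + |T f₂ x|))
    (hweak : ∀ (f : Rn n → ℝ) (t : ℝ), 0 < t →
      C {x | t < |T f x|} ≤
        ENNReal.ofReal (A₁ / t) * choquet C (fun x => ENNReal.ofReal |f x|))
    (hinfty : ∀ f : Rn n → ℝ,
      choquetEssSup C (T f) ≤ ENNReal.ofReal A₂ * choquetEssSup C f)
    (p : ℝ) (hp : 1 < p) :
    ∃ A₃ : ℝ, 0 < A₃ ∧ ∀ f : Rn n → ℝ,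
      choquet C (fun x => ENNReal.ofReal |T f x| ^ p) ≤
        ENNReal.ofReal A₃ * choquet C (fun x => ENNReal.ofReal |f x| ^ p) := by
  let μ : OuterMeasure (Rn n) :=
    { measureOf := C
      empty := hempty
      mono := hmono _ _
      iUnion_nat := fun s _ => hsub s }
  have hp' : 0 < p - 1 := sub_pos.2 hp
  exact ⟨2 * K * A₁ * ((2 * A₂ * K) ^ (p - 1) * p / (p - 1)), by positivity,
    choquet_ofReal_abs_rpow_le (μ := μ) hK hA₂ hquasi hweak hinfty hp⟩

end
end
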